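/- Let C be a category with a monoidal structure whose underlying category is cocomplete and co-wellpowered. If μ : C → D and ν : C → E are epimorphisms in the category of comonoids in C, and h : D → E is an isomorphism in C (of underlying objects) satisfying h ∘ μ = ν, then h is a comonoid morphism (i.e., it is compatible with the comultiplications and counits of D and E), and hence an isomorphism of comonoids. Consequently, if the underlying category C is co-wellpowered, then so is the category of comonoids in C. -/

import Mathlib

/-!
The forgetful functor from comonoids preserves epimorphisms: dually, `Mon.forget` creates
limits and so preserves monomorphisms. Hence an epimorphism of comonoids `μ` can be cancelled
in `C`, and `μ ≫ h = ν` with `ν` a comonoid morphism forces `h` to respect `Δ` and `ε`. So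
two comonoid quotients of `A` with isomorphic underlying quotients in `C` are isomorphic as
comonoid quotients, and taking underlying objects embeds the quotients of `A` in `Comon C`
into the set of quotients of `A.X` in `C`.
-/

open CategoryTheory MonoidalCategory Limits Opposite

universe v

namespace CategoryTheory

instance Functor.op_preservesMonomorphisms {C D : Type*} [Category C] [Category D] (F : C ⥤ D)
    [F.PreservesEpimorphisms] : F.op.PreservesMonomorphisms where
  preserves f _ := op_mono_of_epi (F.map f.unop)

theorem wellPowered_of_reflects_subobject_iso {C D : Type*} [Category C] [Category D]
    (F : D ⥤ C) [F.PreservesMonomorphisms] [WellPowered.{v} C]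
    (hF : ∀ {X A B : D} (f : A ⟶ X) (g : B ⟶ X) [Mono f] [Mono g] (e : F.obj A ≅ F.obj B),
      e.hom ≫ F.map g = F.map f → Subobject.mk f = Subobject.mk g) :
    WellPowered.{v} D := by
  refine ⟨fun X => ?_⟩
  let image : Subobject X → Subobject (F.obj X) :=
    Subobject.lift (fun _ f _ => Subobject.mk (F.map f)) fun _ _ f g _ _ i w =>
      Subobject.mk_eq_mk_of_comm _ _ (F.mapIso i) (by rw [F.mapIso_hom, ← F.map_comp, w])
  refine small_of_injective (f := image) (Subobject.ind₂ _ fun _ _ f g _ _ hfg => ?_)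
  replace hfg : Subobject.mk (F.map f) = Subobject.mk (F.map g) := hfg
  exact hF f g (Subobject.isoOfMkEqMk _ _ hfg) (Subobject.ofMkLEMk_comp hfg.le)

namespace Comon

variable {C : Type*} [Category.{v} C] [MonoidalCategory C]

/-- Epimorphisms of comonoids are monomorphisms of monoids in `Cᵒᵖ`, and `Mon.forget Cᵒᵖ`
preserves those since it creates pullbacks. -/
instance forget_preservesEpimorphisms [HasPushouts C] : (forget C).PreservesEpimorphisms where
  preserves μ _ := by
    let μ' := ((Comon_EquivMon_OpOp C).functor.map μ).unop
    have : Mono μ' := unop_mono_of_epi _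
    have : Mono μ.hom.op := (Mon.forget Cᵒᵖ).map_mono μ'
    exact unop_epi_of_mono μ.hom.op

theorem isComonHom_of_epi_comp_eq {A D E : Comon C} (μ : A ⟶ D) [Epi μ.hom] (ν : A ⟶ E)
    (h : D.X ⟶ E.X) (w : μ.hom ≫ h = ν.hom) : IsComonHom h where
  hom_counit := by
    rw [← cancel_epi μ.hom, reassoc_of% w, IsComonHom.hom_counit, IsComonHom.hom_counit]
  hom_comul := by
    rw [← cancel_epi μ.hom, reassoc_of% w, IsComonHom.hom_comul, IsComonHom.hom_comul_assoc,
      tensorHom_comp_tensorHom, w]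

theorem isComonHom_of_comp_eq [HasPushouts C] {A D E : Comon C} (μ : A ⟶ D) [Epi μ]
    (ν : A ⟶ E) (h : D.X ⟶ E.X) (w : μ.hom ≫ h = ν.hom) : IsComonHom h :=
  have : Epi μ.hom := (forget C).map_epi μ
  isComonHom_of_epi_comp_eq μ ν h w

theorem wellPowered_op [HasPushouts C] [WellPowered.{v} Cᵒᵖ] :
    WellPowered.{v} (Comon C)ᵒᵖ :=
  wellPowered_of_reflects_subobject_iso (forget C).op fun f g _ _ e w => by
    have : Epi g.unop := unop_epi_of_mono g
    have w' : g.unop.hom ≫ e.unop.hom = f.unop.hom := Quiver.Hom.op_inj w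
    have := isComonHom_of_comp_eq g.unop f.unop e.unop.hom w'
    exact Subobject.mk_eq_mk_of_comm _ _ (mkIso' e.unop).op
      (Quiver.Hom.unop_inj (Comon.ext w'))

end Comon

end CategoryTheory

theorem comon_epi_iso_is_comon_hom_and_coWellPowered
    (C : Type*) [Category.{v} C] [MonoidalCategory C]
    [Limits.HasColimits C] [WellPowered.{v} Cᵒᵖ] :
    (∀ (A D E : Comon C) (μ : A ⟶ D) (ν : A ⟶ E), Epi μ → Epi ν →
      ∀ (h : D.X ≅ E.X), μ.hom ≫ h.hom = ν.hom →
        (h.hom ≫ ComonObj.counit (X := E.X) = ComonObj.counit (X := D.X) ∧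
         h.hom ≫ ComonObj.comul (X := E.X) = ComonObj.comul (X := D.X) ≫ (h.hom ⊗ₘ h.hom))) ∧
    WellPowered.{v} (Comon C)ᵒᵖ := by
  refine ⟨fun A D E μ ν _ _ h w => ?_, Comon.wellPowered_op⟩
  have := Comon.isComonHom_of_comp_eq μ ν h.hom w
  exact ⟨IsComonHom.hom_counit h.hom, IsComonHom.hom_comul h.hom⟩
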